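/- Let d be even and F₁,…,F_d symmetric with zero means. Then the infimum of E(X₁⋯X_d) over couplings with X_i ~ F_i equals −E(∏_{i=1}^d G_i⁻¹(U)), attained by X_i = F_i⁻¹(U) for i = 1,…,d−1 and X_d = F_d⁻¹(1−U), with U ~ Uniform[0,1]. -/

import Mathlib

/-!
For symmetric `Fᵢ` the quantile of `|Xᵢ|` is `Gᵢ⁻¹(v) = Fᵢ⁻¹((1 + v) / 2)`, and
`Fᵢ⁻¹(1 - u) = -Fᵢ⁻¹(u)` for almost every `u`. So for the proposed coupling the product is
`-∏ Gᵢ⁻¹(|2u - 1|)`: for `u > 1/2` only the last factor changes sign, for `u < 1/2` the other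
`d - 1` factors do, an odd number. As `u ↦ |2u - 1|` preserves the uniform law, this gives the
value.

For the bound, `E ∏ Xᵢ ≥ -E ∏ |Xᵢ|`, and among nonnegative `Wᵢ` with laws `Gᵢ` the comonotone
coupling `Gᵢ⁻¹(U)` maximises `E ∏ Wᵢ`: by the layer-cake formula `E ∏ Wᵢ = ∫ P(∀ i, Wᵢ > tᵢ) dt`,
and `P(∀ i, Wᵢ > tᵢ) ≤ minᵢ P(Wᵢ > tᵢ)`, with equality for the comonotone coupling.
-/

open MeasureTheory Set

/-- Generalized inverse (quantile function). -/
noncomputable def quantile (ν : Measure ℝ) (u : ℝ) : ℝ :=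
  sInf {x : ℝ | u ≤ (ν (Iic x)).toReal}

open ProbabilityTheory Filter Topology
open scoped ENNReal

section Quantile

variable {ν : Measure ℝ} {u x : ℝ}

lemma quantile_of_nonpos (ν : Measure ℝ) (hu : u ≤ 0) : quantile ν u = 0 := by
  have : {x : ℝ | u ≤ (ν (Iic x)).toReal} = univ :=
    eq_univ_of_forall fun _ => hu.trans ENNReal.toReal_nonneg
  rw [quantile, this, Real.sInf_univ]

lemma quantile_nonneg (hν : ν (Iio 0) = 0) (u : ℝ) : 0 ≤ quantile ν u := by
  rcases le_or_gt u 0 with hu | hu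
  · exact (quantile_of_nonpos ν hu).ge
  refine Real.sInf_nonneg fun x hx => le_of_not_gt fun hx0 => hu.not_ge ?_
  have : ν (Iic x) = 0 := measure_mono_null (Iic_subset_Iio.2 hx0) hν
  simpa [this] using hx

lemma bddBelow_setOf_le_cdf (hu : 0 < u) : BddBelow {x | u ≤ cdf ν x} := by
  obtain ⟨M, hM⟩ := ((tendsto_cdf_atBot ν).eventually_lt_const hu).exists
  exact ⟨M, fun x hx => le_of_not_gt fun hxM => (hx.trans (monotone_cdf ν hxM.le)).not_gt hM⟩

lemma nonempty_setOf_le_cdf (hu : u < 1) : {x | u ≤ cdf ν x}.Nonempty :=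
  ((tendsto_cdf_atTop ν).eventually_const_lt hu).exists.imp fun _ => le_of_lt

variable [IsProbabilityMeasure ν]

lemma quantile_eq_sInf_cdf : quantile ν u = sInf {x | u ≤ cdf ν x} := by
  simp only [quantile, cdf_eq_real, measureReal_def]

lemma quantile_of_one_lt (hu : 1 < u) : quantile ν u = 0 := by
  have : {x | u ≤ cdf ν x} = ∅ := eq_empty_of_forall_notMem fun x hx =>
    (hu.trans_le hx).not_ge (cdf_le_one ν x)
  rw [quantile_eq_sInf_cdf, this, Real.sInf_empty]

/-- The infimum defining the quantile is attained, by right continuity of the cdf. -/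
lemma le_cdf_quantile (hu : u < 1) : u ≤ cdf ν (quantile ν u) := by
  rw [quantile_eq_sInf_cdf]
  refine ge_of_tendsto ((cdf ν).right_continuous _ |>.mono Ioi_subset_Ici_self) ?_
  filter_upwards [self_mem_nhdsWithin] with x hx
  obtain ⟨y, hy, hyx⟩ := exists_lt_of_csInf_lt (nonempty_setOf_le_cdf hu) hx
  exact hy.trans (monotone_cdf ν hyx.le)

lemma quantile_le_iff (hu0 : 0 < u) (hu1 : u < 1) : quantile ν u ≤ x ↔ u ≤ cdf ν x :=
  ⟨fun h => (le_cdf_quantile hu1).trans (monotone_cdf ν h), fun h => by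
    rw [quantile_eq_sInf_cdf]; exact csInf_le (bddBelow_setOf_le_cdf hu0) h⟩

lemma lt_quantile_iff (hu0 : 0 < u) (hu1 : u < 1) : x < quantile ν u ↔ cdf ν x < u := by
  simpa only [not_le] using (quantile_le_iff (x := x) hu0 hu1).not

lemma monotoneOn_quantile : MonotoneOn (quantile ν) (Ioo 0 1) := fun _ hu _ hv huv =>
  (quantile_le_iff hu.1 hu.2).2 (huv.trans (le_cdf_quantile hv.2))

lemma continuousAt_quantile_of_notMem_Icc (hu : u ∉ Icc 0 1) : ContinuousAt (quantile ν) u := by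
  have hopen : IsOpen (Icc (0 : ℝ) 1)ᶜ := isClosed_Icc.isOpen_compl
  refine (continuousAt_const (y := (0 : ℝ))).congr
    (eventuallyEq_of_mem (hopen.mem_nhds hu) fun v hv => ?_)
  rcases not_and_or.1 hv with hv | hv
  · exact (quantile_of_nonpos ν (not_le.1 hv).le).symm
  · exact (quantile_of_one_lt (not_le.1 hv)).symm

lemma measurable_quantile : Measurable (quantile ν) := by
  refine measurable_of_countable_not_continuousAt <|
    ((monotoneOn_quantile (ν := ν)).countable_not_continuousWithinAt.union
      (toFinite {0, 1}).countable).mono fun u hu => ?_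
  by_cases h01 : u ∈ Ioo 0 1
  · exact Or.inl ⟨h01, by rwa [continuousWithinAt_iff_continuousAt (Ioo_mem_nhds h01.1 h01.2)]⟩
  by_cases hIcc : u ∈ Icc 0 1
  · right
    rcases eq_or_lt_of_le hIcc.1 with rfl | h0
    · exact Or.inl rfl
    · exact Or.inr (eq_of_le_of_not_lt hIcc.2 fun h1 => h01 ⟨h0, h1⟩)
  · exact absurd (continuousAt_quantile_of_notMem_Icc hIcc) hu

end Quantile

instance (ν : Measure ℝ) [IsProbabilityMeasure ν] :
    IsProbabilityMeasure (ν.map fun x => |x|) :=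
  Measure.isProbabilityMeasure_map measurable_abs.aemeasurable

section Symmetric

variable {ν : Measure ℝ} [IsProbabilityMeasure ν] {u v x : ℝ}

lemma measureReal_Iio_neg (hsym : ν.map (fun x => -x) = ν) (x : ℝ) :
    ν.real (Iio (-x)) = 1 - cdf ν x := by
  have : ν.real (Iio (-x)) = ν.real (Ioi x) := by
    rw [← hsym, map_measureReal_apply measurable_neg measurableSet_Ioi]
    congr 1
    ext y
    simp
  rw [this, ← compl_Iic, probReal_compl_eq_one_sub measurableSet_Iic, cdf_eq_real]

lemma cdf_le_half_of_neg (hsym : ν.map (fun x => -x) = ν) (hx : x < 0) : cdf ν x ≤ 1 / 2 := by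
  have h : ν.real (Iic x) ≤ ν.real (Iio (-x)) := measureReal_mono (Iic_subset_Iio.2 (by linarith))
  rw [measureReal_Iio_neg hsym, ← cdf_eq_real] at h
  linarith

lemma cdf_map_abs_of_neg (hx : x < 0) : cdf (ν.map fun x => |x|) x = 0 := by
  rw [cdf_eq_real, map_measureReal_apply measurable_abs measurableSet_Iic]
  have : (fun y : ℝ => |y|) ⁻¹' Iic x = ∅ :=
    eq_empty_of_forall_notMem fun y hy => (hx.trans_le (abs_nonneg y)).not_ge hy
  rw [this, measureReal_empty]

lemma cdf_map_abs_of_nonneg (hsym : ν.map (fun x => -x) = ν) (hx : 0 ≤ x) :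
    cdf (ν.map fun x => |x|) x = 2 * cdf ν x - 1 := by
  rw [cdf_eq_real, map_measureReal_apply measurable_abs measurableSet_Iic]
  have : (fun y : ℝ => |y|) ⁻¹' Iic x = Iic x \ Iio (-x) := by
    ext y
    simp [abs_le, and_comm]
  rw [this, measureReal_sdiff (Iio_subset_Iic (by linarith)) measurableSet_Iio,
    measureReal_Iio_neg hsym, cdf_eq_real]
  ring

lemma quantile_map_abs (hsym : ν.map (fun x => -x) = ν) (hv : 0 < v) :
    quantile (ν.map fun x => |x|) v = quantile ν ((1 + v) / 2) := by
  simp only [quantile_eq_sInf_cdf]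
  congr 1
  ext x
  simp only [mem_ofPred_eq]
  rcases lt_or_ge x 0 with hx | hx
  · rw [cdf_map_abs_of_neg hx]
    have := cdf_le_half_of_neg hsym hx
    constructor <;> intro h <;> linarith
  · rw [cdf_map_abs_of_nonneg hsym hx]
    constructor <;> intro h <;> linarith

lemma quantile_add_quantile_one_sub_nonpos (hsym : ν.map (fun x => -x) = ν)
    (hu0 : 0 < u) (hu1 : u < 1) : quantile ν u + quantile ν (1 - u) ≤ 0 := by
  suffices quantile ν u ≤ -quantile ν (1 - u) by linarith
  refine le_of_forall_lt_imp_le_of_dense fun y hy => ?_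
  have hcdf : cdf ν y < u := (lt_quantile_iff hu0 hu1).1 hy
  have hIio : ν.real (Iio y) ≤ cdf ν y := by
    rw [cdf_eq_real]; exact measureReal_mono Iio_subset_Iic_self
  have : quantile ν (1 - u) ≤ -y := by
    rw [quantile_le_iff (by linarith) (by linarith)]
    have := measureReal_Iio_neg hsym (-y)
    rw [neg_neg] at this
    linarith
  linarith

lemma neg_quantile_le_quantile_one_sub (hsym : ν.map (fun x => -x) = ν)
    (hu0 : 0 < u) (huv : u < v) (hv1 : v < 1) : -quantile ν v ≤ quantile ν (1 - u) := by
  refine le_of_forall_lt fun x hx => ?_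
  rw [lt_quantile_iff (ν := ν) (by linarith) (by linarith)]
  have hv : v ≤ ν.real (Iio (-x)) := by
    refine (le_cdf_quantile (ν := ν) hv1).trans ?_
    rw [cdf_eq_real]
    exact measureReal_mono (Iic_subset_Iio.2 (by linarith))
  rw [measureReal_Iio_neg hsym] at hv
  linarith

/-- The two inequalities above squeeze `F⁻¹(1 - u)` between `-F⁻¹(u)` and `-F⁻¹(u+)`;
these agree off the countably many jumps of the monotone function `F⁻¹`. -/
lemma ae_quantile_one_sub_eq_neg (hsym : ν.map (fun x => -x) = ν) :
    ∀ᵐ u, u ∈ Ioo (0 : ℝ) 1 → quantile ν (1 - u) = -quantile ν u := by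
  filter_upwards [(monotoneOn_quantile (ν := ν)).countable_not_continuousWithinAt.ae_notMem volume]
    with u hu hu01
  have hcont : ContinuousWithinAt (quantile ν) (Ioo u 1) u :=
    (not_not.1 fun h => hu ⟨hu01, h⟩).mono (Ioo_subset_Ioo_left hu01.1.le)
  have := left_nhdsWithin_Ioo_neBot hu01.2
  have : -quantile ν (1 - u) ≤ quantile ν u :=
    ge_of_tendsto hcont (eventually_nhdsWithin_of_forall fun v hv =>
      neg_le.1 (neg_quantile_le_quantile_one_sub hsym hu01.1 hv.1 hv.2))
  linarith [quantile_add_quantile_one_sub_nonpos hsym hu01.1 hu01.2]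

end Symmetric

lemma setIntegral_Icc_comp_abs_two_mul_sub_one (g : ℝ → ℝ) :
    ∫ u in Icc (0 : ℝ) 1, g |2 * u - 1| = ∫ u in Icc (0 : ℝ) 1, g u := by
  have hind : ∀ w : ℝ, (Icc 0 1).indicator g |w| = (Icc (-1) 1).indicator (fun w => g |w|) w := by
    intro w
    simp only [indicator, mem_Icc, abs_nonneg, true_and, abs_le]
  have hsym : ∫ w in Icc (-1 : ℝ) 1, g |w| = 2 * ∫ u in Icc (0 : ℝ) 1, g u := by
    have hIoc : Ioi (0 : ℝ) ∩ Icc 0 1 = Ioc 0 1 := by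
      ext
      simp only [mem_inter_iff, mem_Ioi, mem_Icc, mem_Ioc]
      exact ⟨fun h => ⟨h.1, h.2.2⟩, fun h => ⟨h.1, h.1.le, h.2⟩⟩
    rw [← integral_indicator measurableSet_Icc, ← funext hind, integral_comp_abs,
      setIntegral_indicator measurableSet_Icc, hIoc, integral_Icc_eq_integral_Ioc]
  rw [integral_Icc_eq_integral_Ioc, ← intervalIntegral.integral_of_le zero_le_one,
    intervalIntegral.integral_comp_mul_sub (fun w => g |w|) two_ne_zero,
    intervalIntegral.integral_of_le (by norm_num), ← integral_Icc_eq_integral_Ioc]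
  norm_num [hsym]
  ring

lemma Fintype.prod_ite_eq_neg {ι R : Type*} [Fintype ι] [DecidableEq ι] [CommRing R]
    (j : ι) (a : ι → R) : ∏ i, (if i = j then -a i else a i) = -∏ i, a i := by
  rw [← Finset.mul_prod_erase _ _ (Finset.mem_univ j), ← Finset.mul_prod_erase _ a
    (Finset.mem_univ j), if_pos rfl,
    Finset.prod_congr rfl fun i hi => if_neg (Finset.ne_of_mem_erase hi), neg_mul]

lemma Fintype.prod_ite_neg_eq_neg {ι R : Type*} [Fintype ι] [DecidableEq ι] [CommRing R]
    (hι : Even (Fintype.card ι)) (j : ι) (a : ι → R) :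
    ∏ i, (if i = j then a i else -a i) = -∏ i, a i := by
  have : ∀ i, (if i = j then a i else -a i) = -(if i = j then -a i else a i) := by
    intro i; split_ifs <;> simp
  simp_rw [this, Finset.prod_neg, Fintype.prod_ite_eq_neg, Finset.card_univ, hι.neg_one_pow,
    one_mul]

lemma ae_prod_quantile_reflect_last {d : ℕ} (hd : Even d) (hd0 : 0 < d) {F : Fin d → Measure ℝ}
    [∀ i, IsProbabilityMeasure (F i)] (hsym : ∀ i, (F i).map (fun x => -x) = F i) :
    ∀ᵐ u ∂volume.restrict (Icc (0 : ℝ) 1),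
      ∏ i : Fin d, (if (i : ℕ) = d - 1 then quantile (F i) (1 - u) else quantile (F i) u)
        = -∏ i, quantile ((F i).map fun x => |x|) |2 * u - 1| := by
  set j : Fin d := ⟨d - 1, by omega⟩
  have hj : ∀ i : Fin d, (i : ℕ) = d - 1 ↔ i = j := fun i => (Fin.ext_iff (b := j)).symm
  rw [ae_restrict_iff' measurableSet_Icc]
  filter_upwards [ae_all_iff.2 fun i => ae_quantile_one_sub_eq_neg (hsym i),
    (toFinite {0, 1 / 2, 1}).countable.ae_notMem volume] with u hrefl hu hIcc
  simp only [mem_insert_iff, mem_singleton_iff, not_or] at hu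
  obtain ⟨hu0, hhalf, hu1⟩ := hu
  have hu01 : u ∈ Ioo 0 1 := ⟨lt_of_le_of_ne hIcc.1 (Ne.symm hu0), lt_of_le_of_ne hIcc.2 hu1⟩
  simp_rw [hj]
  rcases lt_or_gt_of_ne hhalf with hlt | hgt
  · have habs : ∀ i, quantile ((F i).map fun x => |x|) |2 * u - 1| = quantile (F i) (1 - u) := by
      intro i
      rw [abs_of_neg (by linarith), quantile_map_abs (hsym i) (by linarith)]
      ring_nf
    have hneg : ∀ i, quantile (F i) u = -quantile (F i) (1 - u) := fun i => by
      rw [hrefl i hu01, neg_neg]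
    simp_rw [habs, hneg]
    exact Fintype.prod_ite_neg_eq_neg (by simpa using hd) j _
  · have habs : ∀ i, quantile ((F i).map fun x => |x|) |2 * u - 1| = quantile (F i) u := by
      intro i
      rw [abs_of_pos (by linarith), quantile_map_abs (hsym i) (by linarith)]
      ring_nf
    simp_rw [habs, fun i => hrefl i hu01]
    exact Fintype.prod_ite_eq_neg j _

section ProductBound

variable {ι Ω : Type*} [Fintype ι] [MeasurableSpace Ω] {μ : Measure Ω}

/-- Layer-cake formula for a product: `∏ zᵢ⁺` is the volume of the box `∏ (0, zᵢ)`, then Tonelli. -/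
lemma lintegral_prod_ofReal_eq_lintegral_measure (μ : Measure Ω) [SFinite μ]
    {Z : ι → Ω → ℝ} (hZ : ∀ i, Measurable (Z i)) :
    ∫⁻ ω, ∏ i, ENNReal.ofReal (Z i ω) ∂μ = ∫⁻ t : ι → ℝ, μ {ω | ∀ i, t i ∈ Ioo 0 (Z i ω)} := by
  set E : Set (Ω × (ι → ℝ)) := {p | ∀ i, p.2 i ∈ Ioo 0 (Z i p.1)}
  have hE : MeasurableSet E := by
    simp only [E, mem_Ioo, ofPred_forall, ofPred_and]
    exact .iInter fun i => (measurableSet_lt measurable_const (measurable_pi_apply i |>.comp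
      measurable_snd)).inter (measurableSet_lt (measurable_pi_apply i |>.comp measurable_snd)
      ((hZ i).comp measurable_fst))
  calc ∫⁻ ω, ∏ i, ENNReal.ofReal (Z i ω) ∂μ = ∫⁻ ω, volume (Prod.mk ω ⁻¹' E) ∂μ := by
        refine lintegral_congr fun ω => ?_
        have : Prod.mk ω ⁻¹' E = univ.pi fun i => Ioo 0 (Z i ω) := by ext; simp [E]
        simp [this, volume_pi_pi, Real.volume_Ioo]
    _ = (μ.prod volume) E := (Measure.prod_apply hE).symm
    _ = ∫⁻ t : ι → ℝ, μ {ω | ∀ i, t i ∈ Ioo 0 (Z i ω)} := Measure.prod_apply_symm hE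

lemma measure_Ioi_eq_ofReal_one_sub_cdf (ν : Measure ℝ) [IsProbabilityMeasure ν] (x : ℝ) :
    ν (Ioi x) = ENNReal.ofReal (1 - cdf ν x) := by
  rw [← compl_Iic, prob_compl_eq_one_sub measurableSet_Iic, ENNReal.ofReal_sub _ (cdf_nonneg ν x),
    ENNReal.ofReal_one, ofReal_cdf]

variable {G : ι → Measure ℝ} [∀ i, IsProbabilityMeasure (G i)] {W : ι → Ω → ℝ}

/-- Fréchet's bound `P(∀ i, Wᵢ > tᵢ) ≤ minᵢ P(Wᵢ > tᵢ)`; the right side is that minimum,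
realised by the comonotone coupling `Wᵢ = Gᵢ⁻¹(U)`. -/
lemma measure_forall_lt_le_volume_forall_lt_quantile [Nonempty ι]
    (hW : ∀ i, Measurable (W i)) (hlaw : ∀ i, μ.map (W i) = G i) (t : ι → ℝ) :
    μ {ω | ∀ i, t i ∈ Ioo 0 (W i ω)}
      ≤ volume.restrict (Icc 0 1) {u | ∀ i, t i ∈ Ioo 0 (quantile (G i) u)} := by
  by_cases hpos : ∀ i, 0 < t i
  swap
  · obtain ⟨j, hj⟩ := not_forall.1 hpos
    have : {ω | ∀ i, t i ∈ Ioo 0 (W i ω)} = ∅ :=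
      eq_empty_of_forall_notMem fun ω hω => hj (hω j).1
    rw [this, measure_empty]
    exact zero_le
  obtain ⟨j, hj⟩ := Finite.exists_max fun i => cdf (G i) (t i)
  have hsub : Ioo (cdf (G j) (t j)) 1 ⊆ {u | ∀ i, t i ∈ Ioo 0 (quantile (G i) u)} := by
    intro u hu
    have hu0 : 0 < u := (cdf_nonneg _ _).trans_lt hu.1
    exact fun i => ⟨hpos i, (lt_quantile_iff hu0 hu.2).2 ((hj i).trans_lt hu.1)⟩
  calc μ {ω | ∀ i, t i ∈ Ioo 0 (W i ω)} ≤ μ (W j ⁻¹' Ioi (t j)) := measure_mono fun ω hω => (hω j).2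
    _ = volume (Ioo (cdf (G j) (t j)) 1) := by
        rw [← Measure.map_apply (hW j) measurableSet_Ioi, hlaw j,
          measure_Ioi_eq_ofReal_one_sub_cdf, Real.volume_Ioo]
    _ = volume.restrict (Icc 0 1) (Ioo (cdf (G j) (t j)) 1) :=
        (Measure.restrict_eq_self _ (Ioo_subset_Icc_self.trans
          (Icc_subset_Icc_left (cdf_nonneg _ _)))).symm
    _ ≤ _ := measure_mono hsub

lemma lintegral_prod_le_lintegral_prod_quantile [Nonempty ι] [SFinite μ]
    (hW : ∀ i, Measurable (W i)) (hlaw : ∀ i, μ.map (W i) = G i) :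
    ∫⁻ ω, ∏ i, ENNReal.ofReal (W i ω) ∂μ
      ≤ ∫⁻ u in Icc 0 1, ∏ i, ENNReal.ofReal (quantile (G i) u) := by
  rw [lintegral_prod_ofReal_eq_lintegral_measure μ hW,
    lintegral_prod_ofReal_eq_lintegral_measure _ fun i => measurable_quantile]
  exact lintegral_mono fun t => measure_forall_lt_le_volume_forall_lt_quantile hW hlaw t

lemma integral_prod_le_integral_prod_quantile [Nonempty ι] [SFinite μ]
    (hW : ∀ i, Measurable (W i)) (hW0 : ∀ i ω, 0 ≤ W i ω) (hlaw : ∀ i, μ.map (W i) = G i)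
    (hQ : IntegrableOn (fun u => ∏ i, quantile (G i) u) (Icc 0 1)) :
    ∫ ω, ∏ i, W i ω ∂μ ≤ ∫ u in Icc 0 1, ∏ i, quantile (G i) u := by
  have hG0 : ∀ i, G i (Iio 0) = 0 := fun i => by
    rw [← hlaw i, Measure.map_apply (hW i) measurableSet_Iio]
    exact measure_mono_null (fun ω hω => (hW0 i ω).not_gt hω) measure_empty
  have hQ0 : ∀ u, 0 ≤ ∏ i, quantile (G i) u := fun u =>
    Finset.prod_nonneg fun i _ => quantile_nonneg (hG0 i) u
  rw [integral_eq_lintegral_of_nonneg_ae (.of_forall fun ω => Finset.prod_nonneg fun i _ =>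
      hW0 i ω) (Finset.measurable_prod _ fun i _ => hW i).aestronglyMeasurable,
    integral_eq_lintegral_of_nonneg_ae (.of_forall hQ0) hQ.aestronglyMeasurable]
  refine ENNReal.toReal_mono hQ.lintegral_lt_top.ne ?_
  simp only [ENNReal.ofReal_prod_of_nonneg fun i _ => hW0 i _,
    ENNReal.ofReal_prod_of_nonneg fun i _ => quantile_nonneg (hG0 i) _]
  exact lintegral_prod_le_lintegral_prod_quantile hW hlaw

end ProductBound

theorem stmt_7_general (d : ℕ) (hd : Even d) (hd0 : 0 < d) (F : Fin d → Measure ℝ)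
    [∀ i, IsProbabilityMeasure (F i)]
    (hsym : ∀ i, (F i).map (fun x => -x) = F i)
    (hIntQ : IntegrableOn
      (fun u => ∏ i, quantile ((F i).map (fun x => |x|)) u) (Icc (0:ℝ) 1) volume) :
    (∫ u in Icc (0:ℝ) 1,
        ∏ i : Fin d, (if (i : ℕ) = d - 1 then quantile (F i) (1 - u) else quantile (F i) u)
        = -∫ u in Icc (0:ℝ) 1, ∏ i, quantile ((F i).map (fun x => |x|)) u) ∧
    (∀ (Ω : Type*) [MeasurableSpace Ω] (μ : Measure Ω) [IsProbabilityMeasure μ]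
        (Y : Fin d → Ω → ℝ), (∀ i, Measurable (Y i)) → (∀ i, μ.map (Y i) = F i) →
        Integrable (fun ω => ∏ i, Y i ω) μ →
        ∫ u in Icc (0:ℝ) 1,
            ∏ i : Fin d, (if (i : ℕ) = d - 1 then quantile (F i) (1 - u) else quantile (F i) u)
          ≤ ∫ ω, ∏ i, Y i ω ∂μ) := by
  have hvalue := (integral_congr_ae (ae_prod_quantile_reflect_last hd hd0 hsym)).trans <| by
    rw [integral_neg, setIntegral_Icc_comp_abs_two_mul_sub_one
      fun v => ∏ i, quantile ((F i).map fun x => |x|) v]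
  refine ⟨hvalue, fun Ω _ μ _ Y hY hlaw _ => ?_⟩
  have : Nonempty (Fin d) := ⟨⟨0, hd0⟩⟩
  have hlaw_abs : ∀ i, μ.map (fun ω => |Y i ω|) = (F i).map fun x => |x| := fun i => by
    rw [← hlaw i, Measure.map_map measurable_abs (hY i)]
    rfl
  have hbound := integral_prod_le_integral_prod_quantile (fun i => (hY i).abs)
    (fun i ω => abs_nonneg (Y i ω)) hlaw_abs hIntQ
  simp only [← Finset.abs_prod] at hbound
  rw [hvalue]
  linarith [neg_abs_le (∫ ω, ∏ i, Y i ω ∂μ), abs_integral_le_integral_abs (μ := μ)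
    (f := fun ω => ∏ i, Y i ω)]

/-- For `d` even and symmetric zero-mean marginals, the infimum of the expected product
equals `−E(∏ G_i⁻¹(U))` and is attained by `X_i = F_i⁻¹(U)` for `i < d` and
`X_d = F_d⁻¹(1−U)`. -/
theorem stmt_7 (d : ℕ) (hd : Even d) (hd0 : 0 < d) (F : Fin d → Measure ℝ)
    [∀ i, IsProbabilityMeasure (F i)]
    (hsym : ∀ i, (F i).map (fun x => -x) = F i)
    (hL2 : ∀ i, MemLp (id : ℝ → ℝ) 2 (F i))
    (hIntQ : IntegrableOn
      (fun u => ∏ i, quantile ((F i).map (fun x => |x|)) u) (Icc (0:ℝ) 1) volume)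
    (hIntA : IntegrableOn
      (fun u => ∏ i : Fin d, (if (i : ℕ) = d - 1 then quantile (F i) (1 - u) else quantile (F i) u))
      (Icc (0:ℝ) 1) volume) :
    (∫ u in Icc (0:ℝ) 1,
        ∏ i : Fin d, (if (i : ℕ) = d - 1 then quantile (F i) (1 - u) else quantile (F i) u)
        = -∫ u in Icc (0:ℝ) 1, ∏ i, quantile ((F i).map (fun x => |x|)) u) ∧
    (∀ (Ω : Type*) [MeasurableSpace Ω] (μ : Measure Ω) [IsProbabilityMeasure μ]
        (Y : Fin d → Ω → ℝ), (∀ i, Measurable (Y i)) → (∀ i, μ.map (Y i) = F i) →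
        Integrable (fun ω => ∏ i, Y i ω) μ →
        ∫ u in Icc (0:ℝ) 1,
            ∏ i : Fin d, (if (i : ℕ) = d - 1 then quantile (F i) (1 - u) else quantile (F i) u)
          ≤ ∫ ω, ∏ i, Y i ω ∂μ) :=
  stmt_7_general d hd hd0 F hsym hIntQ
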